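/- For n > 2, let (SpC)_n ⊆ Δ[n] be the union of the images of the 2-simplices Δ[2] → Δ[n] corresponding to the monotone maps [2] → [n] with image {0, i, i+1}, for 0 < i < n. Then Sp_n ⊆ (SpC)_n and C_n ⊆ (SpC)_n; moreover the inclusion Sp_n → (SpC)_n is a finite composition of pushouts of the spine inclusion sp₂ : Sp₂ → Δ[2], and the inclusion C_n → (SpC)_n is a finite composition of pushouts of the left cone inclusion c₂ : C₂ → Δ[2]. -/

import Mathlib

open CategoryTheory CategoryTheory.GrothendieckTopology CategoryTheory.Limits Simplicial SSet Opposite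

noncomputable section

namespace BousfieldPaper

/-! ## Basic lifting-property classes of simplicial sets -/

/-- A Kan fibration: a map with the right lifting property against all horn inclusions. -/
def KanFibration {S T : SSet.{0}} (p : S ⟶ T) : Prop :=
  ∀ (n : ℕ) (i : Fin (n + 2)), HasLiftingProperty (Λ[n + 1, i].ι) p

/-- An acyclic (trivial) Kan fibration: a map with the right lifting property against
all boundary inclusions. -/
def TrivialKanFibration {S T : SSet.{0}} (p : S ⟶ T) : Prop :=
  ∀ n : ℕ, HasLiftingProperty (∂Δ[n].ι) p

/-- The class of maps with the right lifting property against every map in `T`. -/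
def rlpOf {C : Type*} [Category C] (T : MorphismProperty C) : MorphismProperty C :=
  fun _ _ p => ∀ ⦃A B : C⦄ (i : A ⟶ B), T i → HasLiftingProperty i p

/-- The class of maps with the left lifting property against every map in `T`. -/
def llpOf {C : Type*} [Category C] (T : MorphismProperty C) : MorphismProperty C :=
  fun _ _ i => ∀ ⦃S T' : C⦄ (p : S ⟶ T'), T p → HasLiftingProperty i p

/-- The saturation `llp(rlp(S))` of a class of maps. -/
def saturationOf {C : Type*} [Category C] (S : MorphismProperty C) : MorphismProperty C :=
  llpOf (rlpOf S)

/-- The class of all horn inclusions (up to isomorphism of arrows). -/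
def HornClass : MorphismProperty SSet.{0} := fun _ _ f =>
  ∃ (n : ℕ) (i : Fin (n + 2)), Nonempty (Arrow.mk f ≅ Arrow.mk (Λ[n + 1, i].ι))

/-- The class of left horn inclusions `Λ[n,0] → Δ[n]`, `n ≥ 2` (up to isomorphism of arrows). -/
def LeftHornClass : MorphismProperty SSet.{0} := fun _ _ f =>
  ∃ n : ℕ, 2 ≤ n ∧ Nonempty (Arrow.mk f ≅ Arrow.mk (Λ[n, 0].ι))

/-- Anodyne maps: the saturation of the class of horn inclusions. -/
def Anodyne : MorphismProperty SSet.{0} := saturationOf HornClass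

/-- A weak homotopy equivalence of simplicial sets (in the Kan--Quillen sense):
a map admitting a factorization as an anodyne map followed by an acyclic Kan fibration. -/
def WeakHomotopyEquivalence {S T : SSet.{0}} (f : S ⟶ T) : Prop :=
  ∃ (Z : SSet.{0}) (i : S ⟶ Z) (p : Z ⟶ T),
    Anodyne i ∧ TrivialKanFibration p ∧ i ≫ p = f

/-! ## Saturated classes -/

/-- `f` is a retract of `g` in the arrow category. -/
def IsRetractOf {C : Type*} [Category C] {X Y X' Y' : C} (f : X ⟶ Y) (g : X' ⟶ Y') : Prop :=
  ∃ (i : Arrow.mk f ⟶ Arrow.mk g) (r : Arrow.mk g ⟶ Arrow.mk f), i ≫ r = 𝟙 _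

/-- The inclusion functor of the subposet `{x | x < j}` of `J`. -/
def iioFunctor {J : Type} [Preorder J] (j : J) : Set.Iio j ⥤ J :=
  Monotone.functor (f := fun x => (x : J)) (fun _ _ h => h)

/-- The cocone on the restriction of `F : J ⥤ C` to `{x | x < j}` with apex `F.obj j`. -/
def coconeBelow {J : Type} [Preorder J] {C : Type*} [Category C]
    (F : J ⥤ C) (j : J) : Cocone (iioFunctor j ⋙ F) where
  pt := F.obj j
  ι :=
    { app := fun x => F.map (homOfLE (le_of_lt x.2))
      naturality := fun x y g => by
        dsimp [iioFunctor, Monotone.functor]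
        rw [← F.map_comp, Category.comp_id]
        congr 1 }

/-- A class of morphisms of simplicial sets is *saturated* (weakly saturated) if it is closed
under pushouts (cobase change), retracts and transfinite compositions. -/
structure IsSaturated (A : MorphismProperty SSet.{0}) : Prop where
  pushout : ∀ ⦃X Y X' Y' : SSet.{0}⦄ (f : X ⟶ Y) (u : X ⟶ X') (v : Y ⟶ Y') (f' : X' ⟶ Y'),
    IsPushout f u v f' → A f → A f'
  retract : ∀ ⦃X Y X' Y' : SSet.{0}⦄ (f : X ⟶ Y) (g : X' ⟶ Y'),
    IsRetractOf f g → A g → A f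
  transfinite : ∀ (J : Type) (_ : LinearOrder J) (_ : SuccOrder J) (_ : OrderBot J)
    (_ : WellFoundedLT J) (F : J ⥤ SSet.{0}) (c : Cocone F) (_ : IsColimit c),
    (∀ j : J, ¬IsMax j → A (F.map (homOfLE (Order.le_succ j)))) →
    (∀ j : J, Order.IsSuccLimit j → Nonempty (IsColimit (coconeBelow F j))) →
    A (c.ι.app ⊥)

/-- Right cancellation property for monomorphisms. -/
def RightCancel (A : MorphismProperty SSet.{0}) : Prop :=
  ∀ ⦃X Y Z : SSet.{0}⦄ (u : X ⟶ Y) (v : Y ⟶ Z),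
    Mono u → Mono v → A (u ≫ v) → A u → A v

/-- Left cancellation property for monomorphisms. -/
def LeftCancel (A : MorphismProperty SSet.{0}) : Prop :=
  ∀ ⦃X Y Z : SSet.{0}⦄ (u : X ⟶ Y) (v : Y ⟶ Z),
    Mono u → Mono v → A (u ≫ v) → A v → A u

/-- 3-for-2 for monomorphisms: both left and right cancellation. -/
def ThreeForTwo (A : MorphismProperty SSet.{0}) : Prop :=
  RightCancel A ∧ LeftCancel A

/-! ## The left cone, the spine, and related subcomplexes of the standard simplex -/

/-- The left cone `C n ⊆ Δ[n]`: the union of the images of the initial edges `0 → i`. -/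
def coneSub (n : ℕ) : Subfunctor Δ[n] where
  obj m := {α | ∃ i : ℕ, 1 ≤ i ∧ i ≤ n ∧
    ∀ j, (stdSimplex.asOrderHom α j : ℕ) = 0 ∨ (stdSimplex.asOrderHom α j : ℕ) = i}
  map := by
    rintro m m' g α ⟨i, hi1, hin, h⟩
    exact ⟨i, hi1, hin, fun j => h _⟩

/-- The spine `Sp n ⊆ Δ[n]`: the union of the images of the edges `i → i+1`. -/
def spineSub (n : ℕ) : Subfunctor Δ[n] where
  obj m := {α | ∃ i : ℕ, i + 1 ≤ n ∧
    ∀ j, (stdSimplex.asOrderHom α j : ℕ) = i ∨ (stdSimplex.asOrderHom α j : ℕ) = i + 1}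
  map := by
    rintro m m' g α ⟨i, hi, h⟩
    exact ⟨i, hi, fun j => h _⟩

/-- The union `(SpC) n ⊆ Δ[n]` of the images of the `2`-simplices `{0, i, i+1}`, `0 < i < n`. -/
def spcSub (n : ℕ) : Subfunctor Δ[n] where
  obj m := {α | ∃ i : ℕ, 0 < i ∧ i + 1 ≤ n ∧
    ∀ j, (stdSimplex.asOrderHom α j : ℕ) = 0 ∨ (stdSimplex.asOrderHom α j : ℕ) = i ∨ (stdSimplex.asOrderHom α j : ℕ) = i + 1}
  map := by
    rintro m m' g α ⟨i, h₀, h₁, h⟩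
    exact ⟨i, h₀, h₁, fun j => h _⟩

/-- The canonical inclusion `k n : C n → Λ[n, 0]` of the left cone into the left horn. -/
def coneToHorn (n : ℕ) (hn : 2 ≤ n) : ((coneSub n).toFunctor : SSet.{0}) ⟶ Λ[n, 0] where
  app m := ↾fun α => by
    refine ⟨α.1, ?_⟩
    obtain ⟨i, hi1, hin, h⟩ := α.2
    intro hu
    rw [Set.eq_univ_iff_forall] at hu
    obtain ⟨kv, hkv0, hkvi, hkvlt⟩ : ∃ kv : ℕ, kv ≠ 0 ∧ kv ≠ i ∧ kv < n + 1 := by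
      rcases eq_or_ne i 1 with hc | hc
      · exact ⟨2, by omega, by omega, by omega⟩
      · exact ⟨1, by omega, by omega, by omega⟩
    rcases hu ⟨kv, hkvlt⟩ with hr | h0
    · obtain ⟨j, hj⟩ := hr
      have hval := congrArg Fin.val hj
      rcases h j with h' | h' <;> simp_all
    · have := congrArg Fin.val (Set.mem_singleton_iff.1 h0)
      simp_all

/-- The nerve `IΔ^n` of the free groupoid (codiscrete groupoid) on `{0, …, n}`:
its `m`-simplices are all (not necessarily monotone) functions `Fin (m+1) → Fin (n+1)`. -/
def IDelta (n : ℕ) : SSet.{0} where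
  obj m := Fin (m.unop.len + 1) → Fin (n + 1)
  map f := ↾fun α => α ∘ f.unop.toOrderHom

/-- The canonical inclusion `Δ[n] → IΔ^n`. -/
def iDeltaIncl (n : ℕ) : (Δ[n] : SSet.{0}) ⟶ IDelta n where
  app m := ↾fun α => ⇑(stdSimplex.asOrderHom α)

/-- The vertex `k : Δ[0] → IΔ^n`. -/
def iDeltaVertex (n : ℕ) (k : Fin (n + 1)) : (Δ[0] : SSet.{0}) ⟶ IDelta n where
  app m := ↾fun _ => fun _ => k


/-! ## Bisimplicial sets, the box product and the slash construction -/

/-- Bisimplicial sets: presheaves of sets on `Δ × Δ`. -/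
abbrev BSSet : Type 1 := (SimplexCategory × SimplexCategory)ᵒᵖ ⥤ Type

/-- The box product `A □ B` of two simplicial sets: `(A □ B)_{n,m} = A_n × B_m`. -/
def box (A B : SSet.{0}) : BSSet where
  obj nm := A.obj (op nm.unop.1) × B.obj (op nm.unop.2)
  map f := ↾fun p => ⟨A.map f.unop.1.op p.1, B.map f.unop.2.op p.2⟩

/-- The box product, functorially in its second variable. -/
def boxFunctor (A : SSet.{0}) : SSet.{0} ⥤ BSSet where
  obj B := box A B
  map g :=
    { app := fun nm => ↾fun p => ⟨p.1, g.app _ p.2⟩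
      naturality := fun nm nm' f => by
        ext p
        apply Prod.ext
        · rfl
        · exact NatTrans.naturality_apply g f.unop.2.op p.2 }

/-- The box product is natural in its first variable. -/
def boxHomLeft {A A' : SSet.{0}} (f : A ⟶ A') (B : SSet.{0}) :
    (boxFunctor A).obj B ⟶ (boxFunctor A').obj B where
  app nm := ↾fun p => ⟨f.app _ p.1, p.2⟩
  naturality nm nm' g := by
    ext p
    apply Prod.ext
    · change f.app _ (A.map g.unop.1.op p.1) = A'.map g.unop.1.op (f.app _ p.1)
      exact NatTrans.naturality_apply f g.unop.1.op p.1
    · rfl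

lemma boxHomLeft_natural {A A' : SSet.{0}} (f : A ⟶ A') {B B' : SSet.{0}} (g : B ⟶ B') :
    (boxFunctor A).map g ≫ boxHomLeft f B' = boxHomLeft f B ≫ (boxFunctor A').map g := rfl

/-- The simplicial set `A \ X` with `m`-simplices the bisimplicial maps `A □ Δ[m] → X`. -/
def slash (A : SSet.{0}) (X : BSSet) : SSet.{0} :=
  SSet.stdSimplex.op ⋙ ((boxFunctor A).op ⋙ yoneda.obj X)

/-- Functoriality (contravariance) of `A \ X` in `A`. -/
def slashMap {A A' : SSet.{0}} (f : A ⟶ A') (X : BSSet) : slash A' X ⟶ slash A X :=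
  Functor.whiskerLeft SSet.stdSimplex.op
    (Functor.whiskerRight (NatTrans.op
      { app := fun B => boxHomLeft f B
        naturality := fun _ _ g => (boxHomLeft_natural f g).symm }) (yoneda.obj X))

lemma slashMap_id (A : SSet.{0}) (X : BSSet) : slashMap (𝟙 A) X = 𝟙 (slash A X) := rfl

lemma slashMap_comp {A A' A'' : SSet.{0}} (f : A ⟶ A') (g : A' ⟶ A'') (X : BSSet) :
    slashMap (f ≫ g) X = slashMap g X ≫ slashMap f X := rfl


/-! ## Columns, Reedy fibrancy, Segal and Bousfield maps -/

/-- The `n`-th column `X_n := Δ[n] \ X` of a bisimplicial set. -/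
def col (n : ℕ) (X : BSSet) : SSet.{0} := slash Δ[n] X

/-- The face map `d_i : X_{n+1} → X_n` between columns. -/
def colδ {n : ℕ} (i : Fin (n + 2)) (X : BSSet) : col (n + 1) X ⟶ col n X :=
  slashMap (SSet.stdSimplex.map (SimplexCategory.δ i)) X

/-- The degeneracy map `s_i : X_n → X_{n+1}` between columns. -/
def colσ {n : ℕ} (i : Fin (n + 1)) (X : BSSet) : col n X ⟶ col (n + 1) X :=
  slashMap (SSet.stdSimplex.map (SimplexCategory.σ i)) X

/-- A bisimplicial set is `v`-fibrant (Reedy fibrant) if `f \ X` is a Kan fibration for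
every monomorphism `f` of simplicial sets. -/
def VFibrant (X : BSSet) : Prop :=
  ∀ ⦃A B : SSet.{0}⦄ (f : A ⟶ B), Mono f → KanFibration (slashMap f X)

/-- The `n`-th Bousfield map `β_n = c_n \ X : X_n → C_n \ X`. -/
def bousfieldMap (n : ℕ) (X : BSSet) : col n X ⟶ slash (coneSub n).toFunctor X :=
  slashMap (coneSub n).ι X

/-- The `n`-th Segal map `ξ_n = sp_n \ X : X_n → Sp_n \ X`. -/
def segalMap (n : ℕ) (X : BSSet) : col n X ⟶ slash (spineSub n).toFunctor X :=
  slashMap (spineSub n).ι X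

/-- A Bousfield-Segal space: a `v`-fibrant bisimplicial set whose Bousfield maps `β_n`,
`n ≥ 2`, are weak homotopy equivalences. -/
def IsBSegal (X : BSSet) : Prop :=
  VFibrant X ∧ ∀ n : ℕ, 2 ≤ n → WeakHomotopyEquivalence (bousfieldMap n X)

/-- A Segal space: a `v`-fibrant bisimplicial set whose Segal maps `ξ_n`,
`n ≥ 2`, are weak homotopy equivalences. -/
def IsSegal (X : BSSet) : Prop :=
  VFibrant X ∧ ∀ n : ℕ, 2 ≤ n → WeakHomotopyEquivalence (segalMap n X)

/-- The map `IΔ^1 \ X → X_0` induced by the vertex `{0} : Δ[0] → IΔ^1`. -/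
def completenessMap (X : BSSet) : slash (IDelta 1) X ⟶ col 0 X :=
  slashMap (iDeltaVertex 1 0) X

/-- A complete Bousfield-Segal space. -/
def IsCompleteBSegal (X : BSSet) : Prop :=
  IsBSegal X ∧ WeakHomotopyEquivalence (completenessMap X)

/-- A bisimplicial set is homotopically constant if every map of the simplex category
induces a weak homotopy equivalence between the corresponding columns. -/
def HomotopicallyConstant (X : BSSet) : Prop :=
  ∀ ⦃a b : SimplexCategory⦄ (f : a ⟶ b),
    WeakHomotopyEquivalence (slashMap (SSet.stdSimplex.map f) X)

/-! ## Vertices, edges and the fraction operation -/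

/-- The vertices of a simplicial set. -/
def vert (S : SSet.{0}) : Type := S.obj (op (SimplexCategory.mk 0))

/-- Two vertices of a simplicial set lie in the same connected component, i.e. they have
equal classes in `π₀`. -/
def hSim (S : SSet.{0}) (a b : vert S) : Prop :=
  Relation.EqvGen (fun v w : vert S => ∃ e : S.obj (op (SimplexCategory.mk 1)),
    SimplicialObject.δ S 1 e = v ∧ SimplicialObject.δ S 0 e = w) a b

/-- The edge `0 → i` of the left cone `C n`. -/
def coneEdge (n : ℕ) (i : Fin (n + 1)) (hi : i ≠ 0) :
    (Δ[1] : SSet.{0}) ⟶ (coneSub n).toFunctor where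
  app m := ↾fun β => by
    refine ⟨(SSet.stdSimplex.map (SimplexCategory.mkOfLe 0 i (Fin.zero_le i))).app m β, ?_⟩
    have hne : (i : ℕ) ≠ 0 := fun h => hi (by apply Fin.ext; simpa using h)
    refine ⟨(i : ℕ), by omega, i.is_le, fun j => ?_⟩
    have key : ∀ k : Fin 2,
        (((SimplexCategory.mkOfLe (0 : Fin (n + 1)) i (Fin.zero_le i)).toOrderHom k : Fin (n+1)) : ℕ) = 0 ∨
        (((SimplexCategory.mkOfLe (0 : Fin (n + 1)) i (Fin.zero_le i)).toOrderHom k : Fin (n+1)) : ℕ) = i := by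
      intro k
      match k with
      | 0 => left; rfl
      | 1 => right; rfl
    exact key _
  naturality m m' g := by
    ext β
    apply Subtype.ext
    exact NatTrans.naturality_apply (SSet.stdSimplex.map
      (SimplexCategory.mkOfLe 0 i (Fin.zero_le i))) g β

variable (X : BSSet)

/-- Vertex component of the restriction along the edge `0 → 2` of `C₂` (the "numerator"). -/
def eF (w : vert (slash (coneSub 2).toFunctor X)) : vert (col 1 X) :=
  (slashMap (coneEdge 2 2 (by decide)) X).app _ w

/-- Vertex component of the restriction along the edge `0 → 1` of `C₂` (the "denominator"). -/
def eG (w : vert (slash (coneSub 2).toFunctor X)) : vert (col 1 X) :=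
  (slashMap (coneEdge 2 1 (by decide)) X).app _ w

/-- Vertex component of the face map `d_i : X_1 → X_0`. -/
def dV (i : Fin 2) (f : vert (col 1 X)) : vert (col 0 X) := (colδ i X).app _ f

/-- Vertex component of the degeneracy `s_0 : X_0 → X_1`; `oneV X x` is `1_x`. -/
def oneV (x : vert (col 0 X)) : vert (col 1 X) := (colσ 0 X).app _ x

/-- The fraction operation determined by a section `μ₂` of the Bousfield map `β₂`:
`f/g := d₀ (μ₂ (f, g))`. -/
def fracV (μ₂ : slash (coneSub 2).toFunctor X ⟶ col 2 X)
    (w : vert (slash (coneSub 2).toFunctor X)) : vert (col 1 X) :=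
  (colδ 0 X).app _ (μ₂.app _ w)

lemma dV_oneV (x : vert (col 0 X)) (i : Fin 2) : dV X i (oneV X x) = x := by
  have h : colσ (0 : Fin 1) X ≫ colδ i X = 𝟙 (col 0 X) := by
    rw [colδ, colσ]
    erw [← slashMap_comp, ← Functor.map_comp]
    have : SimplexCategory.δ i ≫ SimplexCategory.σ (0 : Fin 1) = 𝟙 (SimplexCategory.mk 0) := by
      fin_cases i
      · exact SimplexCategory.δ_comp_σ_self
      · exact SimplexCategory.δ_comp_σ_succ
    rw [this]
    erw [CategoryTheory.Functor.map_id, slashMap_id]; rfl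
  exact ConcreteCategory.congr_hom (congrArg (fun (t : col 0 X ⟶ col 0 X) => t.app (op (SimplexCategory.mk 0)))
    h) x

/-- The identity morphism `1_x` as an element of the hom-space `X₁(x,x)`. -/
def idHom (x : vert (col 0 X)) :
    {f : vert (col 1 X) // dV X 1 f = x ∧ dV X 0 f = x} :=
  ⟨oneV X x, dV_oneV X x 1, dV_oneV X x 0⟩


/-! ## Cellularity, pushouts of coproducts, finite compositions of pushouts -/

/-- `f` is a pushout (cobase change) of `g`. -/
def IsPushoutOf {C : Type*} [Category C] {A B X Y : C} (g : A ⟶ B) (f : X ⟶ Y) : Prop :=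
  ∃ (u : A ⟶ X) (v : B ⟶ Y), IsPushout g u v f

/-- `f` is a pushout of a coproduct of maps belonging to the class `S`. -/
def IsPushoutOfCoproductOf (S : MorphismProperty SSet.{0}) {P Q : SSet.{0}} (f : P ⟶ Q) : Prop :=
  ∃ (ι : Type) (A B : ι → SSet.{0}) (g : ∀ i, A i ⟶ B i),
    (∀ i, S (g i)) ∧
      IsPushoutOf (Limits.Sigma.desc (fun i => g i ≫ Limits.Sigma.ι B i) : (∐ A) ⟶ (∐ B)) f

/-- `f` is cellular with respect to the class `S`: it is a (transfinite, here `ℕ`-indexed)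
composition of pushouts of coproducts of maps of `S`. -/
def IsCellularIn (S : MorphismProperty SSet.{0}) {X Y : SSet.{0}} (f : X ⟶ Y) : Prop :=
  ∃ (F : ℕ ⥤ SSet.{0}) (c : Cocone F) (_ : IsColimit c) (e₀ : F.obj 0 ≅ X) (e : c.pt ≅ Y),
    (∀ m : ℕ, IsPushoutOfCoproductOf S (F.map (homOfLE (Nat.le_succ m)))) ∧
      f = e₀.inv ≫ c.ι.app 0 ≫ e.hom

/-- `f` is a finite composition of pushouts of `g`. -/
inductive FinCompPushoutsOf {A B : SSet.{0}} (g : A ⟶ B) : ∀ {X Y : SSet.{0}}, (X ⟶ Y) → Prop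
  /-- A single pushout of `g`. -/
  | of {X Y : SSet.{0}} (f : X ⟶ Y) : IsPushoutOf g f → FinCompPushoutsOf g f
  /-- A pushout of `g` followed by a finite composition of pushouts of `g`. -/
  | comp {X Y Z : SSet.{0}} (f₁ : X ⟶ Y) (f₂ : Y ⟶ Z) :
      IsPushoutOf g f₁ → FinCompPushoutsOf g f₂ → FinCompPushoutsOf g (f₁ ≫ f₂)

/-! ## Lattice operations on subpresheaves -/

variable {C : Type*} [Category C]

/-- Intersection of two subpresheaves. -/
def subInf {F : Cᵒᵖ ⥤ Type} (G G' : Subfunctor F) : Subfunctor F where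
  obj U := G.obj U ∩ G'.obj U
  map i := fun _ hx => ⟨G.map i hx.1, G'.map i hx.2⟩

/-- Union of two subpresheaves. -/
def subSup {F : Cᵒᵖ ⥤ Type} (G G' : Subfunctor F) : Subfunctor F where
  obj U := G.obj U ∪ G'.obj U
  map i := by
    rintro x (hx | hx)
    · exact Or.inl (G.map i hx)
    · exact Or.inr (G'.map i hx)

lemma subInf_le_left {F : Cᵒᵖ ⥤ Type} (G G' : Subfunctor F) : subInf G G' ≤ G :=
  fun _ => Set.inter_subset_left

lemma le_subSup_left {F : Cᵒᵖ ⥤ Type} (G G' : Subfunctor F) : G ≤ subSup G G' :=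
  fun _ => Set.subset_union_left

/-! ## The coface `d¹` and the left cone -/

/-- The coface map `d¹ : Δ[n] → Δ[n+1]`. -/
def d1Map (n : ℕ) : (Δ[n] : SSet.{0}) ⟶ Δ[n + 1] :=
  SSet.stdSimplex.map (SimplexCategory.δ 1)

/-- The restriction of `d¹` to a map `C n → C (n+1) ∩ d¹[Δ[n]]`. -/
def coneToInter (n : ℕ) : ((coneSub n).toFunctor : SSet.{0}) ⟶
    (subInf (coneSub (n + 1)) (Subfunctor.range (d1Map n))).toFunctor where
  app m := ↾fun α => by
    refine ⟨(d1Map n).app m α.1, ?_, ⟨α.1, rfl⟩⟩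
    obtain ⟨i, hi1, hin, h⟩ := α.2
    refine ⟨i + 1, by omega, by omega, fun j => ?_⟩
    have key : stdSimplex.asOrderHom ((d1Map n).app m α.1) j
        = (1 : Fin (n + 2)).succAbove (stdSimplex.asOrderHom α.1 j) := rfl
    rcases h j with h' | h'
    · left
      have h0 : stdSimplex.asOrderHom α.1 j = 0 := by
        apply Fin.ext; exact h'
      rw [key, h0, Fin.succAbove_of_castSucc_lt]
      · simp
      · simp
    · right
      rw [key, Fin.succAbove_of_le_castSucc]
      · simp [Fin.val_succ, h']
      · rw [Fin.le_def]
        simpa using by omega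
  naturality m m' g := by
    ext α
    apply Subtype.ext
    exact NatTrans.naturality_apply (d1Map n) g α.1

/-! ## Horizontally constant bisimplicial sets and closure properties -/

/-- `p₁* A`: the horizontally constant bisimplicial set with `(p₁* A)_{n,m} = A_n`. -/
def pHorizontal (A : SSet.{0}) : BSSet where
  obj nm := A.obj (op nm.unop.1)
  map f := A.map f.unop.1.op

/-- A class of maps of bisimplicial sets is stable under pullbacks. -/
def StableUnderPullbacksB (F : MorphismProperty BSSet) : Prop :=
  ∀ ⦃W X Y Z : BSSet⦄ (p' : W ⟶ X) (f' : W ⟶ Z) (f : X ⟶ Y) (p : Z ⟶ Y),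
    IsPullback p' f' f p → F f → F f'

/-- A class of maps of bisimplicial sets is stable under retracts. -/
def StableUnderRetractsB (F : MorphismProperty BSSet) : Prop :=
  ∀ ⦃X Y X' Y' : BSSet⦄ (f : X ⟶ Y) (g : X' ⟶ Y'), IsRetractOf f g → F g → F f

/-- A class of maps of bisimplicial sets is closed under sequential (inverse) limits:
limits of towers of arrows belonging to the class again belong to the class. -/
def ClosedUnderSequentialLimitsB (F : MorphismProperty BSSet) : Prop :=
  ∀ (G : ℕᵒᵖ ⥤ Arrow BSSet), (∀ n : ℕᵒᵖ, F (G.obj n).hom) →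
    ∀ (c : Cone G), IsLimit c → F c.pt.hom


/-!
Adding the triangles `{0, i, i + 1}` to `Sp_n` (resp. `C_n`) one at a time, for
`i = 1, …, n - 1`, exhausts `(SpC)_n`. The triangle `{0, k + 1, k + 2}` meets what is already
there exactly in the edges `{0, k + 1}, {k + 1, k + 2}` (resp. `{0, k + 1}, {0, k + 2}`), i.e. in
the image of `Sp₂` (resp. `C₂`). A union of two subcomplexes is the pushout over their
intersection, so each step is a pushout of `sp₂` (resp. `c₂`).
-/

instance mono_stdSimplex_map {m n : SimplexCategory} (f : m ⟶ n) [Mono f] :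
    Mono (SSet.stdSimplex.map f) := by
  rw [NatTrans.mono_iff_mono_app]
  intro k
  rw [mono_iff_injective]
  intro a b h
  exact stdSimplex.objEquiv.injective ((cancel_mono f).1 (stdSimplex.objEquiv.symm.injective h))

universe u

section

variable {X Y : SSet.{u}}

lemma Subcomplex.range_inf_eq_image_preimage (f : Y ⟶ X) (A : X.Subcomplex) :
    Subcomplex.range f ⊓ A = (A.preimage f).image f := by
  ext m x
  aesop

lemma isPushoutOf_homOfLE_sup_range (f : Y ⟶ X) [Mono f] {S : Y.Subcomplex}
    {A B : X.Subcomplex} (hS : A.preimage f = S) (hB : A ⊔ Subcomplex.range f = B) :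
    IsPushoutOf S.ι (Subcomplex.homOfLE (le_sup_left.trans hB.le)) := by
  subst hS hB
  have hinf : Subcomplex.range f ⊓ A = Subcomplex.range ((A.preimage f).ι ≫ f) := by
    rw [Subcomplex.range_inf_eq_image_preimage, Subcomplex.image_eq_range]
  have top : IsPushout (A.preimage f).ι (Subcomplex.toRange ((A.preimage f).ι ≫ f))
      (Subcomplex.toRange f) (Subcomplex.homOfLE (hinf.ge.trans inf_le_left)) :=
    IsPushout.of_vert_isIso ⟨rfl⟩
  have bot := Subcomplex.BicartSq.isPushout (A₁ := Subcomplex.range ((A.preimage f).ι ≫ f))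
    (A₂ := Subcomplex.range f) (A₃ := A) ⟨sup_comm _ _, hinf⟩
  exact ⟨_, _, top.paste_vert bot⟩

end

namespace FinCompPushoutsOf

variable {A B : SSet.{0}} {g : A ⟶ B}

lemma comp_isPushoutOf {X Y Z : SSet.{0}} {f₁ : X ⟶ Y} {f₂ : Y ⟶ Z}
    (h₁ : FinCompPushoutsOf g f₁) (h₂ : IsPushoutOf g f₂) : FinCompPushoutsOf g (f₁ ≫ f₂) := by
  induction h₁ with
  | of f₁ h₁ => exact .comp f₁ f₂ h₁ (.of f₂ h₂)
  | comp f₁ f₁' h₁ _ ih => simpa only [Category.assoc] using .comp f₁ _ h₁ (ih h₂)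

lemma homOfLE_of_monotone {X : SSet.{0}} {F : ℕ → X.Subcomplex} (hF : Monotone F) {i j : ℕ}
    (hij : i < j) (step : ∀ l, i ≤ l → l < j → IsPushoutOf g (Subcomplex.homOfLE (hF l.le_succ))) :
    FinCompPushoutsOf g (Subcomplex.homOfLE (hF hij.le)) := by
  induction j, hij using Nat.le_induction with
  | base => exact .of _ (step i le_rfl i.lt_succ_self)
  | succ j hij ih =>
    exact (ih fun l hil hlj => step l hil (hlj.trans j.lt_succ_self)).comp_isPushoutOf
      (step j (by omega) j.lt_succ_self)

end FinCompPushoutsOf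

section Triangles

variable {n : ℕ} {m : SimplexCategoryᵒᵖ}

def triangleSub (n i : ℕ) : (Δ[n] : SSet.{0}).Subcomplex where
  obj _ := {α | ∀ j, (stdSimplex.asOrderHom α j : ℕ) = 0 ∨ (stdSimplex.asOrderHom α j : ℕ) = i ∨
    (stdSimplex.asOrderHom α j : ℕ) = i + 1}
  map _ _ h _ := h _

/-- The `2`-simplex of `Δ[n]` with vertices `0, k + 1, k + 2`. -/
def triangleHom (n k : ℕ) (hk : k + 2 ≤ n) : ⦋2⦌ ⟶ ⦋n⦌ :=
  SimplexCategory.mkHom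
    ⟨fun j => ⟨if (j : ℕ) = 0 then 0 else k + j, by split_ifs <;> omega⟩, fun a b hab => by
      have : (a : ℕ) ≤ b := hab
      simp only [Fin.mk_le_mk]
      split_ifs <;> omega⟩

instance mono_triangleHom (n k : ℕ) (hk : k + 2 ≤ n) : Mono (triangleHom n k hk) := by
  rw [SimplexCategory.mono_iff_injective]
  intro a b hab
  have : (if (a : ℕ) = 0 then 0 else k + a) = (if (b : ℕ) = 0 then 0 else k + b) :=
    congrArg Fin.val hab
  ext
  split_ifs at this <;> omega

lemma triangleHom_app_val {k : ℕ} (hk : k + 2 ≤ n) (γ : (Δ[2] : SSet.{0}).obj m)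
    (j : Fin (m.unop.len + 1)) :
    let v := (stdSimplex.asOrderHom γ j : ℕ)
    let w := (stdSimplex.asOrderHom ((SSet.stdSimplex.map (triangleHom n k hk)).app m γ) j : ℕ)
    w = 0 ∧ v = 0 ∨ w = k + v ∧ v ≠ 0 := by
  intro v w
  have : w = if v = 0 then 0 else k + v := rfl
  split_ifs at this <;> omega

lemma range_triangleHom {k : ℕ} (hk : k + 2 ≤ n) :
    Subcomplex.range (SSet.stdSimplex.map (triangleHom n k hk)) = triangleSub n (k + 1) := by
  apply le_antisymm
  · rintro m _ ⟨γ, rfl⟩ j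
    have := (stdSimplex.asOrderHom γ j).is_lt
    have := triangleHom_app_val hk γ j
    omega
  · intro m α hα
    -- `v ↦ min (v - k) 2` (truncated subtraction) retracts `Δ[n]` onto the triangle
    let r : Fin (n + 1) →o Fin 3 :=
      ⟨fun v => ⟨min (v - k) 2, by omega⟩, fun v w hvw => by
        have : (v : ℕ) ≤ w := hvw
        simp only [Fin.mk_le_mk]
        omega⟩
    refine ⟨stdSimplex.objMk (r.comp (stdSimplex.asOrderHom α)), ?_⟩
    refine stdSimplex.objEquiv.injective (SimplexCategory.Hom.ext _ _
      (OrderHom.ext _ _ (funext fun j => Fin.ext ?_)))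
    have := hα j
    change (if min ((stdSimplex.asOrderHom α j : ℕ) - k) 2 = 0 then 0
      else k + min ((stdSimplex.asOrderHom α j : ℕ) - k) 2) = (stdSimplex.asOrderHom α j : ℕ)
    split_ifs <;> omega

end Triangles

section Filtration

variable {n : ℕ} {m : SimplexCategoryᵒᵖ}

def spcFiltration (A : (Δ[n] : SSet.{0}).Subcomplex) (k : ℕ) : (Δ[n] : SSet.{0}).Subcomplex :=
  match k with
  | 0 => A
  | k + 1 => spcFiltration A k ⊔ triangleSub n (k + 1)

variable {A : (Δ[n] : SSet.{0}).Subcomplex}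

variable (A) in
lemma spcFiltration_monotone : Monotone (spcFiltration A) :=
  monotone_nat_of_le_succ fun _ => le_sup_left

lemma mem_spcFiltration_iff {k : ℕ} {α : (Δ[n] : SSet.{0}).obj m} :
    α ∈ (spcFiltration A k).obj m ↔
      α ∈ A.obj m ∨ ∃ i, 0 < i ∧ i ≤ k ∧ α ∈ (triangleSub n i).obj m := by
  induction k with
  | zero => simp [spcFiltration]
  | succ k ih =>
    change α ∈ (spcFiltration A k).obj m ∨ α ∈ (triangleSub n (k + 1)).obj m ↔ _
    rw [ih]
    constructor
    · rintro ((h | ⟨i, hi, hik, h⟩) | h)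
      exacts [.inl h, .inr ⟨i, hi, by omega, h⟩, .inr ⟨k + 1, by omega, le_rfl, h⟩]
    · rintro (h | ⟨i, hi, hik, h⟩)
      · exact .inl (.inl h)
      · rcases hik.lt_or_eq with hik | rfl
        exacts [.inl (.inr ⟨i, hi, by omega, h⟩), .inr h]

lemma spcFiltration_eq_spcSub (hA : A ≤ spcSub n) :
    spcFiltration A (n - 1) = spcSub n := by
  ext m α
  rw [mem_spcFiltration_iff]
  constructor
  · rintro (h | ⟨i, hi, hin, h⟩)
    exacts [hA _ h, ⟨i, hi, by omega, h⟩]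
  · rintro ⟨i, hi, hin, h⟩
    exact .inr ⟨i, hi, by omega, h⟩

lemma finCompPushoutsOf_homOfLE_spcSub (hA : A ≤ spcSub n) (hn : 2 ≤ n) {S : (Δ[2] : SSet.{0}).Subcomplex}
    (hS : ∀ k (hk : k + 2 ≤ n),
      (spcFiltration A k).preimage (SSet.stdSimplex.map (triangleHom n k hk)) = S) :
    FinCompPushoutsOf S.ι (Subcomplex.homOfLE hA) := by
  have hchain : ∀ (B) (_ : spcFiltration A (n - 1) = B) (hAB : A ≤ B),
      FinCompPushoutsOf S.ι (Subcomplex.homOfLE hAB) := by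
    rintro _ rfl _
    refine FinCompPushoutsOf.homOfLE_of_monotone (spcFiltration_monotone A) (i := 0)
      (by omega) fun k _ hk => isPushoutOf_homOfLE_sup_range _ (hS k (by omega)) ?_
    rw [range_triangleHom]
    rfl
  exact hchain _ (spcFiltration_eq_spcSub hA) hA

end Filtration

section Preimages

variable {n : ℕ} {m : SimplexCategoryᵒᵖ}

lemma mem_spineSub_two_iff {γ : (Δ[2] : SSet.{0}).obj m} :
    γ ∈ (spineSub 2).obj m ↔ ∀ j j', (stdSimplex.asOrderHom γ j : ℕ) = 0 →
      (stdSimplex.asOrderHom γ j' : ℕ) ≠ 2 := by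
  constructor
  · rintro ⟨i, hi, hγ⟩ j j' h0 h2
    have := hγ j
    have := hγ j'
    omega
  · intro h
    by_cases h0 : ∃ j, (stdSimplex.asOrderHom γ j : ℕ) = 0
    · obtain ⟨j₀, hj₀⟩ := h0
      refine ⟨0, by omega, fun j => ?_⟩
      have := (stdSimplex.asOrderHom γ j).is_lt
      have := h j₀ j hj₀
      omega
    · push Not at h0
      refine ⟨1, by omega, fun j => ?_⟩
      have := (stdSimplex.asOrderHom γ j).is_lt
      have := h0 j
      omega

lemma mem_coneSub_two_iff {γ : (Δ[2] : SSet.{0}).obj m} :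
    γ ∈ (coneSub 2).obj m ↔ ∀ j j', (stdSimplex.asOrderHom γ j : ℕ) = 1 →
      (stdSimplex.asOrderHom γ j' : ℕ) ≠ 2 := by
  constructor
  · rintro ⟨i, hi, hi2, hγ⟩ j j' h1 h2
    have := hγ j
    have := hγ j'
    omega
  · intro h
    by_cases h1 : ∃ j, (stdSimplex.asOrderHom γ j : ℕ) = 1
    · obtain ⟨j₁, hj₁⟩ := h1
      refine ⟨1, le_rfl, by omega, fun j => ?_⟩
      have := (stdSimplex.asOrderHom γ j).is_lt
      have := h j₁ j hj₁
      omega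
    · push Not at h1
      refine ⟨2, by omega, le_rfl, fun j => ?_⟩
      have := (stdSimplex.asOrderHom γ j).is_lt
      have := h1 j
      omega

lemma preimage_spcFiltration_spineSub {k : ℕ} (hk : k + 2 ≤ n) :
    (spcFiltration (spineSub n) k).preimage (SSet.stdSimplex.map (triangleHom n k hk)) =
      spineSub 2 := by
  ext m γ
  change _ ∈ (spcFiltration _ k).obj m ↔ _
  rw [mem_spcFiltration_iff]
  constructor
  · rw [mem_spineSub_two_iff]
    rintro (⟨i, hi, h⟩ | ⟨i, hi, hik, h⟩) j j' h0 h2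
    all_goals
      have := h j
      have := h j'
      have := triangleHom_app_val hk γ j
      have := triangleHom_app_val hk γ j'
      omega
  · rintro ⟨i, hi, hγ⟩
    rcases (by omega : i = 0 ∧ k = 0 ∨ i = 0 ∧ 0 < k ∨ i = 1) with ⟨rfl, rfl⟩ | ⟨rfl, hk0⟩ | rfl
    · refine .inl ⟨0, by omega, fun j => ?_⟩
      have := hγ j
      have := triangleHom_app_val hk γ j
      omega
    · refine .inr ⟨k, hk0, le_rfl, fun j => ?_⟩
      have := hγ j
      have := triangleHom_app_val hk γ j
      omega
    · refine .inl ⟨k + 1, by omega, fun j => ?_⟩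
      have := hγ j
      have := triangleHom_app_val hk γ j
      omega

lemma preimage_spcFiltration_coneSub {k : ℕ} (hk : k + 2 ≤ n) :
    (spcFiltration (coneSub n) k).preimage (SSet.stdSimplex.map (triangleHom n k hk)) =
      coneSub 2 := by
  ext m γ
  change _ ∈ (spcFiltration _ k).obj m ↔ _
  rw [mem_spcFiltration_iff]
  constructor
  · rw [mem_coneSub_two_iff]
    rintro (⟨i, hi, hin, h⟩ | ⟨i, hi, hik, h⟩) j j' h1 h2
    all_goals
      have := h j
      have := h j'
      have := triangleHom_app_val hk γ j
      have := triangleHom_app_val hk γ j'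
      omega
  · rintro ⟨i, hi, hi2, hγ⟩
    refine .inl ⟨k + i, by omega, by omega, fun j => ?_⟩
    have := hγ j
    have := triangleHom_app_val hk γ j
    omega

end Preimages

lemma spineSub_le_spcSub {n : ℕ} (hn : 2 ≤ n) : spineSub n ≤ spcSub n := by
  rintro m α ⟨i, hin, hα⟩
  refine ⟨max i 1, by omega, by omega, fun j => ?_⟩
  have := hα j
  omega

lemma coneSub_le_spcSub {n : ℕ} (hn : 2 ≤ n) : coneSub n ≤ spcSub n := by
  rintro m α ⟨i, hi, hin, hα⟩
  refine ⟨min i (n - 1), by omega, by omega, fun j => ?_⟩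
  have := hα j
  omega

/-- For `n > 2`, let `(SpC)_n ⊆ Δ[n]` be the union of the images of the
`2`-simplices `[2] → [n]` with image `{0, i, i+1}`, `0 < i < n`. Then `Sp_n ⊆ (SpC)_n` and
`C_n ⊆ (SpC)_n`; moreover the inclusion `Sp_n → (SpC)_n` is a finite composition of pushouts of
the spine inclusion `sp₂ : Sp₂ → Δ[2]`, and the inclusion `C_n → (SpC)_n` is a finite
composition of pushouts of the left cone inclusion `c₂ : C₂ → Δ[2]`. -/
theorem spc_factorization (n : ℕ) (hn : 2 < n) :
    ∃ (h₁ : spineSub n ≤ spcSub n) (h₂ : coneSub n ≤ spcSub n),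
      FinCompPushoutsOf ((spineSub 2).ι) (Subfunctor.homOfLe h₁) ∧
      FinCompPushoutsOf ((coneSub 2).ι) (Subfunctor.homOfLe h₂) :=
  ⟨spineSub_le_spcSub hn.le, coneSub_le_spcSub hn.le,
    finCompPushoutsOf_homOfLE_spcSub _ hn.le fun _ hk => preimage_spcFiltration_spineSub hk,
    finCompPushoutsOf_homOfLE_spcSub _ hn.le fun _ hk => preimage_spcFiltration_coneSub hk⟩

end BousfieldPaper
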